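/- Let Ω_A ⊆ V and Ω_B ⊆ W be nonempty compact convex sets in finite-dimensional real vector spaces, and suppose there exist linear functionals u_A : V → ℝ and u_B : W → ℝ with u_A(a) = 1 for all a ∈ Ω_A and u_B(b) = 1 for all b ∈ Ω_B. Then for every x ∈ Ω_A and y ∈ Ω_B, the refinement set of x ⊗ y within the minimal tensor product Ω_A ⊠ Ω_B equals convexHull{a ⊗ b | a ∈ Ref(x), b ∈ Ref(y)}, where Ref(x) and Ref(y) are the refinement sets of x in Ω_A and of y in Ω_B respectively. -/

import Mathlib

open TensorProduct

/-- `s` refines `x` (written `s ≻ x`) relative to the convex set `Ω`: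
there exist `p ∈ (0,1]` and `t ∈ Ω` with `x = p • s + (1-p) • t`. -/
def Refines {V : Type*} [AddCommGroup V] [Module ℝ V] (Ω : Set V) (s x : V) : Prop :=
  ∃ p : ℝ, 0 < p ∧ p ≤ 1 ∧ ∃ t ∈ Ω, x = p • s + (1 - p) • t

/-- The refinement set of `x` in `Ω`: all states of `Ω` refining `x`. -/
def RefSet {V : Type*} [AddCommGroup V] [Module ℝ V] (Ω : Set V) (x : V) : Set V :=
  {s ∈ Ω | Refines Ω s x}

/-- The minimal tensor product of two state spaces. -/
def MinTensor {V W : Type*} [AddCommGroup V] [Module ℝ V] [AddCommGroup W] [Module ℝ W]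
    (S : Set V) (T : Set W) : Set (TensorProduct ℝ V W) :=
  convexHull ℝ {z | ∃ a ∈ S, ∃ b ∈ T, z = a ⊗ₜ[ℝ] b}

/-!
Writing `x = p • s + (1 - p) • t` as `x - p • s ∈ (1 - p) • Ω` turns refinement into a statement
about dilates of `Ω`, and for convex `Ω` the identity `(a + b) • Ω = a • Ω + b • Ω` makes it
transitive and `Ref(x)` convex. In the convex hull of a set `P` of generators, `Ref(x)` is then
the convex hull of the generators refining `x`. For the product generators `a ⊗ b` of
`Ω_A ⊠ Ω_B`, contracting with `u_B` (resp. `u_A`) pushes a refinement `a ⊗ b ≻ x ⊗ y` down to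
`a ≻ x` (resp. `b ≻ y`), while `a ≻ x` and `b ≻ y` give `a ⊗ b ≻ a ⊗ y ≻ x ⊗ y`.
-/

open Set
open scoped Pointwise

section Refines

variable {V : Type*} [AddCommGroup V] [Module ℝ V] {Ω : Set V}

theorem refines_iff_sub_mem_smul {s x : V} :
    Refines Ω s x ↔ ∃ p : ℝ, 0 < p ∧ p ≤ 1 ∧ x - p • s ∈ (1 - p) • Ω := by
  simp only [Refines, mem_smul_set, eq_sub_iff_add_eq, add_comm _ (_ • s), eq_comm (a := x)]

theorem refines_refl {x : V} (hx : x ∈ Ω) : Refines Ω x x :=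
  ⟨1, one_pos, le_rfl, x, hx, by simp⟩

theorem refines_of_mem_openSegment {s t x : V} (ht : t ∈ Ω) (h : x ∈ openSegment ℝ s t) :
    Refines Ω s x := by
  obtain ⟨a, b, ha, hb, hab, rfl⟩ := h
  obtain rfl : b = 1 - a := by linarith
  exact ⟨a, ha, by linarith, t, ht, rfl⟩

theorem Refines.map {W : Type*} [AddCommGroup W] [Module ℝ W] {Ω' : Set W} (f : V →ₗ[ℝ] W)
    (hf : MapsTo f Ω Ω') {s x : V} (h : Refines Ω s x) : Refines Ω' (f s) (f x) := by
  obtain ⟨p, hp0, hp1, t, ht, rfl⟩ := h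
  exact ⟨p, hp0, hp1, f t, hf ht, by simp only [map_add, map_smul]⟩

theorem Refines.trans (hΩ : Convex ℝ Ω) {r s x : V} (hrs : Refines Ω r s)
    (hsx : Refines Ω s x) : Refines Ω r x := by
  rw [refines_iff_sub_mem_smul] at *
  obtain ⟨q, hq0, hq1, hs⟩ := hrs
  obtain ⟨p, hp0, hp1, hx⟩ := hsx
  refine ⟨p * q, by positivity, by nlinarith, ?_⟩
  have hsplit : x - (p * q) • r = (x - p • s) + p • (s - q • r) := by module
  rw [hsplit, show 1 - p * q = (1 - p) + p * (1 - q) by ring,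
    hΩ.add_smul (by linarith) (by nlinarith), mul_smul]
  exact add_mem_add hx (smul_mem_smul_set hs)

theorem sub_smul_mem_smul_of_le (hΩ : Convex ℝ Ω) {s x : V} (hs : s ∈ Ω) {p p' : ℝ}
    (hp1 : p ≤ 1) (hp' : p' ≤ p) (hx : x - p • s ∈ (1 - p) • Ω) :
    x - p' • s ∈ (1 - p') • Ω := by
  have hsplit : x - p' • s = (x - p • s) + (p - p') • s := by module
  rw [hsplit, show 1 - p' = (1 - p) + (p - p') by ring,
    hΩ.add_smul (by linarith) (by linarith)]
  exact add_mem_add hx (smul_mem_smul_set hs)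

theorem convex_refSet (hΩ : Convex ℝ Ω) (x : V) : Convex ℝ (RefSet Ω x) := by
  rintro s₁ ⟨hs₁, h₁⟩ s₂ ⟨hs₂, h₂⟩ a b ha hb hab
  refine ⟨hΩ hs₁ hs₂ ha hb hab, ?_⟩
  rw [refines_iff_sub_mem_smul] at *
  obtain ⟨p₁, hp₁0, hp₁1, hx₁⟩ := h₁
  obtain ⟨p₂, hp₂0, hp₂1, hx₂⟩ := h₂
  set p := min p₁ p₂
  have hp1 : p ≤ 1 := (min_le_left _ _).trans hp₁1
  have hx₁' := sub_smul_mem_smul_of_le hΩ hs₁ hp₁1 (min_le_left p₁ p₂) hx₁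
  have hx₂' := sub_smul_mem_smul_of_le hΩ hs₂ hp₂1 (min_le_right p₁ p₂) hx₂
  refine ⟨p, lt_min hp₁0 hp₂0, hp1, ?_⟩
  have hsplit : x - p • (a • s₁ + b • s₂) = a • (x - p • s₁) + b • (x - p • s₂) := by
    linear_combination (norm := module) -hab • x
  rw [hsplit, show 1 - p = a * (1 - p) + b * (1 - p) by linear_combination (1 - p) * hab.symm,
    hΩ.add_smul (by nlinarith) (by nlinarith), mul_smul, mul_smul]
  exact add_mem_add (smul_mem_smul_set hx₁') (smul_mem_smul_set hx₂')

theorem refSet_subset_refSet (hΩ : Convex ℝ Ω) {z x : V} (h : Refines Ω z x) :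
    RefSet Ω z ⊆ RefSet Ω x :=
  fun _ ⟨he, hez⟩ => ⟨he, hez.trans hΩ h⟩

theorem mem_convexHull_inter_refSet {P : Set V} {z : V} (hz : z ∈ convexHull ℝ P) :
    z ∈ convexHull ℝ (P ∩ RefSet (convexHull ℝ P) z) := by
  have hconv := convex_convexHull ℝ P
  have hmono {z' x : V} (h : Refines (convexHull ℝ P) z' x) :
      convexHull ℝ (P ∩ RefSet (convexHull ℝ P) z') ⊆
        convexHull ℝ (P ∩ RefSet (convexHull ℝ P) x) :=
    convexHull_mono (inter_subset_inter_right P (refSet_subset_refSet hconv h))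
  -- A point of `openSegment z₁ z₂` is refined by both `z₁` and `z₂`.
  suffices convexHull ℝ P ⊆ {z | z ∈ convexHull ℝ (P ∩ RefSet (convexHull ℝ P) z)} from this hz
  refine convexHull_min (fun e he => subset_convexHull ℝ _
    ⟨he, subset_convexHull ℝ P he, refines_refl (subset_convexHull ℝ P he)⟩) ?_
  rw [convex_iff_openSegment_subset]
  intro z₁ hz₁ z₂ hz₂ z hz
  have hΩ₁ : z₁ ∈ convexHull ℝ P := convexHull_mono inter_subset_left hz₁
  have hΩ₂ : z₂ ∈ convexHull ℝ P := convexHull_mono inter_subset_left hz₂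
  have h₁ := hmono (refines_of_mem_openSegment hΩ₂ hz) hz₁
  have h₂ := hmono (refines_of_mem_openSegment hΩ₁ (openSegment_symm ℝ z₁ z₂ ▸ hz)) hz₂
  exact (convex_convexHull ℝ _).openSegment_subset h₁ h₂ hz

theorem refSet_convexHull (P : Set V) (x : V) :
    RefSet (convexHull ℝ P) x = convexHull ℝ (P ∩ RefSet (convexHull ℝ P) x) := by
  have hconv := convex_convexHull ℝ P
  refine Subset.antisymm (fun z ⟨hz, hzx⟩ => ?_)
    (convexHull_min inter_subset_right (convex_refSet hconv x))
  exact convexHull_mono (inter_subset_inter_right P (refSet_subset_refSet hconv hzx))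
    (mem_convexHull_inter_refSet hz)

end Refines

section MinTensor

variable {V W : Type*} [AddCommGroup V] [Module ℝ V] [AddCommGroup W] [Module ℝ W]
  {ΩA : Set V} {ΩB : Set W}

theorem mapsTo_minTensor {U : Type*} [AddCommGroup U] [Module ℝ U] {Ω : Set U}
    (hΩ : Convex ℝ Ω) (f : V ⊗[ℝ] W →ₗ[ℝ] U) (hf : ∀ a ∈ ΩA, ∀ b ∈ ΩB, f (a ⊗ₜ b) ∈ Ω) :
    MapsTo f (MinTensor ΩA ΩB) Ω :=
  convexHull_min (by rintro _ ⟨a, ha, b, hb, rfl⟩; exact hf a ha b hb) (hΩ.linear_preimage f)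

theorem Refines.tmul {a x : V} {b y : W} (hax : Refines ΩA a x) (hby : Refines ΩB b y)
    (ha : a ∈ ΩA) (hy : y ∈ ΩB) :
    Refines (MinTensor ΩA ΩB) (a ⊗ₜ b) (x ⊗ₜ y) := by
  have hprod {a' : V} {b' : W} (ha' : a' ∈ ΩA) (hb' : b' ∈ ΩB) : a' ⊗ₜ b' ∈ MinTensor ΩA ΩB :=
    subset_convexHull ℝ _ ⟨a', ha', b', hb', rfl⟩
  have hab : Refines (MinTensor ΩA ΩB) (a ⊗ₜ b) (a ⊗ₜ y) :=
    hby.map (TensorProduct.mk ℝ V W a) fun _ hb' => hprod ha hb'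
  have hxy : Refines (MinTensor ΩA ΩB) (a ⊗ₜ y) (x ⊗ₜ y) :=
    hax.map ((TensorProduct.mk ℝ V W).flip y) fun _ ha' => hprod ha' hy
  exact hab.trans (convex_convexHull ℝ _) hxy

theorem refines_tmul_iff (hAconv : Convex ℝ ΩA) (hBconv : Convex ℝ ΩB)
    {uA : V →ₗ[ℝ] ℝ} (huA : ∀ a ∈ ΩA, uA a = 1) {uB : W →ₗ[ℝ] ℝ} (huB : ∀ b ∈ ΩB, uB b = 1)
    {x : V} {y : W} (hx : x ∈ ΩA) (hy : y ∈ ΩB) {a : V} {b : W} (ha : a ∈ ΩA) (hb : b ∈ ΩB) :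
    Refines (MinTensor ΩA ΩB) (a ⊗ₜ b) (x ⊗ₜ y) ↔ Refines ΩA a x ∧ Refines ΩB b y := by
  refine ⟨fun h => ⟨?_, ?_⟩, fun ⟨hax, hby⟩ => hax.tmul hby ha hy⟩
  · have := h.map (TensorProduct.rid ℝ V ∘ₗ LinearMap.lTensor V uB)
      (mapsTo_minTensor hAconv _ fun a' ha' b' hb' => by simpa [huB b' hb'] using ha')
    simpa [huB b hb, huB y hy] using this
  · have := h.map (TensorProduct.lid ℝ W ∘ₗ LinearMap.rTensor W uA)
      (mapsTo_minTensor hBconv _ fun a' ha' b' hb' => by simpa [huA a' ha'] using hb')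
    simpa [huA a ha, huA x hx] using this

end MinTensor

theorem refSet_of_product_state_general {V W : Type*}
    [NormedAddCommGroup V] [NormedSpace ℝ V]
    [NormedAddCommGroup W] [NormedSpace ℝ W]
    (ΩA : Set V) (ΩB : Set W)
    (hAconv : Convex ℝ ΩA) (hBconv : Convex ℝ ΩB)
    (uA : V →ₗ[ℝ] ℝ) (huA : ∀ a ∈ ΩA, uA a = 1)
    (uB : W →ₗ[ℝ] ℝ) (huB : ∀ b ∈ ΩB, uB b = 1)
    (x : V) (hx : x ∈ ΩA) (y : W) (hy : y ∈ ΩB) :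
    RefSet (MinTensor ΩA ΩB) (x ⊗ₜ[ℝ] y) =
      convexHull ℝ {z | ∃ a ∈ RefSet ΩA x, ∃ b ∈ RefSet ΩB y, z = a ⊗ₜ[ℝ] b} := by
  rw [MinTensor, refSet_convexHull]
  congr 1
  ext z
  constructor
  · rintro ⟨⟨a, ha, b, hb, rfl⟩, -, hab⟩
    obtain ⟨hax, hby⟩ := (refines_tmul_iff hAconv hBconv huA huB hx hy ha hb).1 hab
    exact ⟨a, ⟨ha, hax⟩, b, ⟨hb, hby⟩, rfl⟩
  · rintro ⟨a, ⟨ha, hax⟩, b, ⟨hb, hby⟩, rfl⟩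
    exact ⟨⟨a, ha, b, hb, rfl⟩, subset_convexHull ℝ _ ⟨a, ha, b, hb, rfl⟩, hax.tmul hby ha hy⟩

/-- for normalised state spaces `Ω_A`, `Ω_B` (admitting unit
functionals), the refinement set of a product state `x ⊗ y` in the minimal
tensor product `Ω_A ⊠ Ω_B` is the convex hull of products of refinements. -/
theorem refSet_of_product_state {V W : Type*}
    [NormedAddCommGroup V] [NormedSpace ℝ V] [FiniteDimensional ℝ V]
    [NormedAddCommGroup W] [NormedSpace ℝ W] [FiniteDimensional ℝ W]
    (ΩA : Set V) (ΩB : Set W)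
    (hAne : ΩA.Nonempty) (hAcomp : IsCompact ΩA) (hAconv : Convex ℝ ΩA)
    (hBne : ΩB.Nonempty) (hBcomp : IsCompact ΩB) (hBconv : Convex ℝ ΩB)
    (uA : V →ₗ[ℝ] ℝ) (huA : ∀ a ∈ ΩA, uA a = 1)
    (uB : W →ₗ[ℝ] ℝ) (huB : ∀ b ∈ ΩB, uB b = 1)
    (x : V) (hx : x ∈ ΩA) (y : W) (hy : y ∈ ΩB) :
    RefSet (MinTensor ΩA ΩB) (x ⊗ₜ[ℝ] y) =
      convexHull ℝ {z | ∃ a ∈ RefSet ΩA x, ∃ b ∈ RefSet ΩB y, z = a ⊗ₜ[ℝ] b} :=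
  refSet_of_product_state_general ΩA ΩB hAconv hBconv uA huA uB huB x hx y hy
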